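/- If Γ is a poly-torsion-free-abelian (PTFA) group, then the rational group algebra ℚΓ has only trivial units: every unit of MonoidAlgebra ℚ Γ is of the form q • (single γ 1) for some nonzero rational number q and some γ ∈ Γ, i.e. a nonzero scalar multiple of a group element. -/

import Mathlib

/-!
A PTFA group is built from the trivial group by finitely many extensions with torsion-free
abelian quotient. Finitely generated torsion-free abelian groups are free abelian, hence have
unique products, and a limit argument over finitely generated subgroups gives the same for every
torsion-free abelian group. The unique product property passes to extensions: take a unique
product in the quotient, then one in the kernel between the two fibres it determines. So `Γ` has
unique products, and, being a group, even two of them whenever `#A * #B > 1` (Strojnowski).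
Applied to the supports of `x, y ∈ ℚΓ`, this leaves two distinct group elements with nonzero
coefficient in `x * y`, so `x * y = 1` forces `x` and `y` to be supported on single points.
-/

open Finset

open scoped commutatorElement

/-- A group `Γ` is poly-torsion-free-abelian (PTFA) if it admits a finite chain of subgroups
`⊥ = H n ≤ … ≤ H 0 = Γ`, each normal in `Γ`, such that each factor `H i / H (i+1)` is
torsion-free abelian. -/
def IsPTFA (Γ : Type*) [Group Γ] : Prop :=
  ∃ (n : ℕ) (H : ℕ → Subgroup Γ),
    H 0 = ⊤ ∧ H n = ⊥ ∧
    (∀ i < n, H (i + 1) ≤ H i) ∧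
    (∀ i ≤ n, (H i).Normal) ∧
    (∀ i < n, ∀ x ∈ H i, ∀ y ∈ H i, ⁅x, y⁆ ∈ H (i + 1)) ∧
    (∀ i < n, ∀ x ∈ H i, ∀ m : ℤ, 0 < m → x ^ m ∈ H (i + 1) → x ∈ H (i + 1))

theorem UniqueMul.of_image_of_mul_eq {G H : Type*} [Mul G] [Mul H] [DecidableEq H]
    {A B : Finset G} {a0 b0 : G} {φ ψ θ : G → H} (hφ : φ.Injective) (hψ : ψ.Injective)
    (hmul : ∀ x y, φ x * ψ y = θ (x * y))
    (hu : UniqueMul (A.image φ) (B.image ψ) (φ a0) (ψ b0)) : UniqueMul A B a0 b0 :=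
  fun x y hx hy hxy ↦
    (hu (mem_image_of_mem φ hx) (mem_image_of_mem ψ hy) (by rw [hmul, hmul, hxy])).imp
      (hφ ·) (hψ ·)

section Group

variable {G : Type*} [Group G]

namespace Subgroup

theorem exists_uniqueMul_of_forall_mem (K : Subgroup G) [UniqueProds K] {A B : Finset G}
    (hA : A.Nonempty) (hB : B.Nonempty) (hAK : ∀ x ∈ A, x ∈ K) (hBK : ∀ y ∈ B, y ∈ K) :
    ∃ a0 ∈ A, ∃ b0 ∈ B, UniqueMul A B a0 b0 := by
  classical
  obtain ⟨a, ha⟩ := hA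
  obtain ⟨b, hb⟩ := hB
  obtain ⟨a0, ha0, b0, hb0, hu⟩ := UniqueProds.uniqueMul_of_nonempty
    (A := A.subtype (· ∈ K)) (B := B.subtype (· ∈ K))
    ⟨⟨a, hAK a ha⟩, mem_subtype.mpr ha⟩ ⟨⟨b, hBK b hb⟩, mem_subtype.mpr hb⟩
  have hu' := (UniqueMul.mulHom_map_iff (Function.Embedding.subtype (· ∈ K)) fun _ _ ↦ rfl).mpr hu
  rw [subtype_map_of_mem hAK, subtype_map_of_mem hBK] at hu'
  exact ⟨a0, by simpa using ha0, b0, by simpa using hb0, hu'⟩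

theorem exists_uniqueMul_of_forall_mem_coset (N : Subgroup G) [hN : N.Normal] [UniqueProds N]
    {A B : Finset G} (hA : A.Nonempty) (hB : B.Nonempty) {a b : G}
    (hAN : ∀ x ∈ A, a⁻¹ * x ∈ N) (hBN : ∀ y ∈ B, b⁻¹ * y ∈ N) :
    ∃ a0 ∈ A, ∃ b0 ∈ B, UniqueMul A B a0 b0 := by
  classical
  -- `x * y = a * b * (φ x * ψ y)`, with `φ x, ψ y ∈ N`
  let φ : G → G := fun x ↦ b⁻¹ * (a⁻¹ * x) * b
  let ψ : G → G := fun y ↦ b⁻¹ * y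
  have hφ : φ.Injective := fun x x' h ↦ by simpa [φ] using h
  have hψ : ψ.Injective := fun y y' h ↦ by simpa [ψ] using h
  obtain ⟨_, hc, _, hd, hu⟩ := N.exists_uniqueMul_of_forall_mem (hA.image φ) (hB.image ψ)
    (forall_mem_image.mpr fun x hx ↦ by simpa [φ] using hN.conj_mem _ (hAN x hx) b⁻¹)
    (forall_mem_image.mpr hBN)
  obtain ⟨a0, ha0, rfl⟩ := mem_image.mp hc
  obtain ⟨b0, hb0, rfl⟩ := mem_image.mp hd
  exact ⟨a0, ha0, b0, hb0,
    hu.of_image_of_mul_eq (θ := fun z ↦ (a * b)⁻¹ * z) hφ hψ fun x y ↦ by simp only [φ, ψ]; group⟩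

end Subgroup

namespace UniqueProds

theorem of_forall_fg (h : ∀ (K : Subgroup G) [Group.FG K], UniqueProds K) : UniqueProds G where
  uniqueMul_of_nonempty {A B} hA hB := by
    classical
    let K := Subgroup.closure ((A ∪ B : Finset G) : Set G)
    exact K.exists_uniqueMul_of_forall_mem hA hB
      (fun x hx ↦ Subgroup.subset_closure (by simp [hx]))
      (fun y hy ↦ Subgroup.subset_closure (by simp [hy]))

theorem of_isMulTorsionFree {G : Type*} [CommGroup G] [IsMulTorsionFree G] : UniqueProds G :=
  -- finitely generated torsion-free abelian groups are free: `AffineMonoid.to_twoUniqueProds`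
  of_forall_fg fun _ _ ↦ inferInstance

theorem of_quotient (N : Subgroup G) [N.Normal] [UniqueProds N] [UniqueProds (G ⧸ N)] :
    UniqueProds G where
  uniqueMul_of_nonempty {A B} hA hB := by
    classical
    let f : G →* G ⧸ N := QuotientGroup.mk' N
    obtain ⟨_, hqa, _, hqb, hq⟩ := uniqueMul_of_nonempty (hA.image f) (hB.image f)
    obtain ⟨a, ha, rfl⟩ := mem_image.mp hqa
    obtain ⟨b, hb, rfl⟩ := mem_image.mp hqb
    obtain ⟨a0, ha0, b0, hb0, hu⟩ := N.exists_uniqueMul_of_forall_mem_coset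
      (A := {x ∈ A | f x = f a}) (B := {y ∈ B | f y = f b})
      ⟨a, mem_filter.mpr ⟨ha, rfl⟩⟩ ⟨b, mem_filter.mpr ⟨hb, rfl⟩⟩
      (fun x hx ↦ QuotientGroup.eq.mp (mem_filter.mp hx).2.symm)
      (fun y hy ↦ QuotientGroup.eq.mp (mem_filter.mp hy).2.symm)
    rw [mem_filter] at ha0 hb0
    exact ⟨a0, ha0.1, b0, hb0.1, UniqueMul.of_image_filter f.toMulHom ha0.2 hb0.2 hq hu⟩

theorem of_commutator_mem (N : Subgroup G) [UniqueProds N] (hcomm : ∀ x y : G, ⁅x, y⁆ ∈ N)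
    (hroot : ∀ (x : G) (m : ℕ), m ≠ 0 → x ^ m ∈ N → x ∈ N) : UniqueProds G := by
  -- `g * n * g⁻¹ = ⁅g, n⁆ * n`
  have : N.Normal := ⟨fun n hn g ↦ by simpa [commutatorElement_def] using mul_mem (hcomm g n) hn⟩
  let _ : CommGroup (G ⧸ N) :=
    { mul_comm := fun p q ↦ by
        obtain ⟨x, rfl⟩ := QuotientGroup.mk_surjective p
        obtain ⟨y, rfl⟩ := QuotientGroup.mk_surjective q
        rw [← QuotientGroup.mk_mul, ← QuotientGroup.mk_mul, QuotientGroup.eq]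
        convert hcomm y⁻¹ x⁻¹ using 1
        group }
  have : IsMulTorsionFree (G ⧸ N) := IsMulTorsionFree.of_not_isOfFinOrder fun p hp hfin ↦ by
    obtain ⟨x, rfl⟩ := QuotientGroup.mk_surjective p
    obtain ⟨m, hm, hxm⟩ := isOfFinOrder_iff_pow_eq_one.mp hfin
    rw [← QuotientGroup.mk_pow, QuotientGroup.eq_one_iff] at hxm
    exact hp ((QuotientGroup.eq_one_iff x).mpr (hroot x m hm.ne' hxm))
  have : UniqueProds (G ⧸ N) := of_isMulTorsionFree
  exact of_quotient N

end UniqueProds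

theorem Subgroup.uniqueProds_of_commutator_mem {K N : Subgroup G} (hNK : N ≤ K) [UniqueProds N]
    (hcomm : ∀ x ∈ K, ∀ y ∈ K, ⁅x, y⁆ ∈ N)
    (hroot : ∀ x ∈ K, ∀ m : ℕ, m ≠ 0 → x ^ m ∈ N → x ∈ N) : UniqueProds K := by
  have : UniqueProds (N.subgroupOf K) := (subgroupOfEquivOfLe hNK).uniqueProds_iff.mpr ‹_›
  refine UniqueProds.of_commutator_mem (N.subgroupOf K) (fun x y ↦ ?_) (fun x m hm hxm ↦ ?_)
  · simpa [mem_subgroupOf, commutatorElement_def] using hcomm x x.2 y y.2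
  · exact hroot x x.2 m hm (by simpa [mem_subgroupOf] using hxm)

theorem IsPTFA.uniqueProds (hG : IsPTFA G) : UniqueProds G := by
  obtain ⟨n, H, h0, hn, hle, -, hcomm, hroot⟩ := hG
  have hH : ∀ i ≤ n, UniqueProds (H i) := fun i hi ↦
    Nat.decreasingInduction (motive := fun i _ ↦ UniqueProds (H i))
      (fun i hi _ ↦ Subgroup.uniqueProds_of_commutator_mem (hle i hi) (hcomm i hi)
        fun x hx m hm hxm ↦ hroot i hi x hx m (by omega) (by rwa [zpow_natCast]))
      (hn ▸ ⟨fun ⟨a, ha⟩ ⟨b, hb⟩ ↦ ⟨a, ha, b, hb, .of_subsingleton⟩⟩) hi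
  have := hH 0 n.zero_le
  rw [h0] at this
  exact Subgroup.topEquiv.uniqueProds_iff.mp this

end Group

namespace MonoidAlgebra

variable {R M : Type*} [Semiring R] [NoZeroDivisors R]

theorem one_lt_card_support_mul [Mul M] [TwoUniqueProds M] {x y : MonoidAlgebra R M}
    (h : 1 < #x.coeff.support * #y.coeff.support) : 1 < #(x * y).coeff.support := by
  obtain ⟨p, hp, q, hq, hpq, hup, huq⟩ := TwoUniqueProds.uniqueMul_of_one_lt_card h
  rw [mem_product] at hp hq
  have mem_support {r : M × M} (hr : r.1 ∈ x.coeff.support ∧ r.2 ∈ y.coeff.support)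
      (hu : UniqueMul x.coeff.support y.coeff.support r.1 r.2) :
      r.1 * r.2 ∈ (x * y).coeff.support := by
    rw [Finsupp.mem_support_iff, coeff_mul_mul_of_uniqueMul hu]
    exact mul_ne_zero (Finsupp.mem_support_iff.mp hr.1) (Finsupp.mem_support_iff.mp hr.2)
  have hne : p.1 * p.2 ≠ q.1 * q.2 := fun he ↦ hpq (Prod.ext_iff.mpr (hup hq.1 hq.2 he.symm)).symm
  exact one_lt_card.mpr ⟨_, mem_support hp hup, _, mem_support hq huq, hne⟩

theorem exists_eq_single_of_isUnit [Nontrivial R] [Monoid M] [TwoUniqueProds M]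
    {x : MonoidAlgebra R M} (hx : IsUnit x) : ∃ (g : M) (r : R), r ≠ 0 ∧ x = single g r := by
  obtain ⟨y, hxy⟩ := hx.exists_right_inv
  have support_card_pos {z : MonoidAlgebra R M} (hz : z ≠ 0) : 0 < #z.coeff.support :=
    card_pos.mpr (Finsupp.support_nonempty_iff.mpr (coeff_eq_zero.not.mpr hz))
  have hx0 := support_card_pos hx.ne_zero
  have hy0 := support_card_pos (right_ne_zero_of_mul_eq_one hxy)
  have hcard : ¬ 1 < #x.coeff.support * #y.coeff.support := fun h ↦ by
    simpa [hxy, one_def, coeff_single] using one_lt_card_support_mul h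
  obtain ⟨g, hg, hxg⟩ := Finsupp.card_support_eq_one.mp (by nlinarith : #x.coeff.support = 1)
  exact ⟨g, x.coeff g, hg, ext hxg⟩

end MonoidAlgebra

/-- If `Γ` is PTFA then `ℚΓ` has only trivial units: every unit is a nonzero rational multiple
of a group element. -/
theorem units_monoidAlgebra_rat_trivial_of_isPTFA (Γ : Type*) [Group Γ] (hΓ : IsPTFA Γ)
    (u : (MonoidAlgebra ℚ Γ)ˣ) :
    ∃ (q : ℚ) (γ : Γ), q ≠ 0 ∧
      (u : MonoidAlgebra ℚ Γ) = q • MonoidAlgebra.single γ (1 : ℚ) := by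
  have := hΓ.uniqueProds
  have := UniqueProds.toTwoUniqueProds_of_group (G := Γ)
  obtain ⟨γ, q, hq, hu⟩ := MonoidAlgebra.exists_eq_single_of_isUnit u.isUnit
  exact ⟨q, γ, hq, by rw [hu, MonoidAlgebra.smul_single', mul_one]⟩
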